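/- Fix K ≥ 1 and suppose G = (g, n, l, a) is a data matrix (a symmetric) that is not ordered, i.e., has a breaking position. Then there exists j with 0 < j < K such that σ_{j-1,j} G ≺ G. Conversely, if σ_{j-1,j} G ≺ G for some 0 < j < K, then G has a breaking position. -/

import Mathlib

open Finset

/-- A data matrix: the vectors `g`, `n`, `l` and the adjacency matrix `a`. -/
abbrev DataMatrix (K : ℕ) :=
  (Fin K → ℕ) × (Fin K → ℕ) × (Fin K → ℕ) × (Fin K → Fin K → ℕ)

/-- The vector `v(G)`: juxtaposition of `g`, `n`, `l` and the strictly upper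
triangular part of `a`, read row by row. -/
def vvec {K : ℕ} (M : DataMatrix K) : List ℕ :=
  List.ofFn M.1 ++ List.ofFn M.2.1 ++ List.ofFn M.2.2.1 ++
    (List.finRange K).flatMap
      (fun i => ((List.finRange K).filter (fun j => i < j)).map
        (fun j => M.2.2.2 i j))

/-- The order `≺`: lexicographic comparison of the vectors `v(·)`. -/
def prec {K : ℕ} (M N : DataMatrix K) : Prop :=
  List.Lex (· < ·) (vvec M) (vvec N)

/-- The action of a permutation on a data matrix. -/
def permAct {K : ℕ} (σ : Equiv.Perm (Fin K)) (M : DataMatrix K) : DataMatrix K :=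
  (fun j => M.1 (σ j), fun j => M.2.1 (σ j), fun j => M.2.2.1 (σ j),
    fun i j => M.2.2.2 (σ i) (σ j))

/-- `M` is ordered: it has no breaking position. -/
def OrderedData {K : ℕ} (M : DataMatrix K) : Prop :=
  ∀ (j : ℕ) (hj : j < K), 0 < j →
    ∀ (p q : Fin K), p = ⟨j - 1, by omega⟩ → q = ⟨j, hj⟩ →
    (M.1 p ≤ M.1 q) ∧
    (M.2.1 q < M.2.1 p → M.1 p < M.1 q) ∧
    (M.2.2.1 q < M.2.2.1 p → M.1 p < M.1 q ∨ M.2.1 p < M.2.1 q) ∧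
    (∀ i : Fin K, i ≠ p → i ≠ q → M.2.2.2 i q < M.2.2.2 i p →
      M.1 p < M.1 q ∨ M.2.1 p < M.2.1 q ∨ M.2.2.1 p < M.2.2.1 q ∨
      ∃ i' : Fin K, (i' : ℕ) < (i : ℕ) ∧ i' ≠ p ∧ i' ≠ q ∧
        M.2.2.2 i' p < M.2.2.2 i' q)

/-!
Transposing `p < q` leaves `v(G)` unchanged up to the `p`-th entries of `g`, `n` and `l`, where
`f p` is replaced by `f q`. In the upper triangle of the symmetric `a` only the pairs `{i, p}` and
`{i, q}` with `i ∉ {p, q}` move, and they exchange `a i p` with `a i q`. In row-major order `{i, p}`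
precedes `{i, q}` and every pair of a larger `i`, so the first change of `v(G)` is at `{i, p}` for
the least `i` with `a i p ≠ a i q`. Hence `σ G ≺ G` exactly when the first difference between the
columns `p` and `q` (read through `g`, `n`, `l` and then `a`) is a decrease, and, taking the least
`i` with `a i q < a i p`, this is exactly the failure of the ordering conditions at `(p, q)`.
-/

namespace List

variable {α β : Type*}

theorem lex_append_iff_of_length_eq {r : α → α → Prop} {A B : List α} (C D : List α)
    (h : A.length = B.length) :
    Lex r (A ++ C) (B ++ D) ↔ Lex r A B ∨ A = B ∧ Lex r C D := by
  induction A generalizing B with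
  | nil =>
    cases B with
    | nil => simp
    | cons => simp at h
  | cons a A ih =>
    cases B with
    | nil => simp at h
    | cons b B =>
      simp only [cons_append, cons_lex_cons_iff, cons.injEq, ih (Nat.succ.inj h)]
      tauto

theorem lex_map_iff_of_pairwise {s : α → α → Prop} (hs : ∀ x y, s x y → ¬ s y x)
    {L : List α} (hL : L.Pairwise s) (r : β → β → Prop) (F G : α → β) :
    Lex r (L.map F) (L.map G) ↔ ∃ x ∈ L, r (F x) (G x) ∧ ∀ y ∈ L, s y x → F y = G y := by
  induction L with
  | nil => simp
  | cons z L ih =>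
    obtain ⟨hz, hL⟩ := pairwise_cons.1 hL
    simp only [map_cons, cons_lex_cons_iff, ih hL]
    constructor
    · rintro (h | ⟨hFG, x, hx, hr, hbefore⟩)
      · refine ⟨z, mem_cons_self, h, fun y hy hyz => ?_⟩
        rcases mem_cons.1 hy with rfl | hy
        · exact absurd hyz (hs _ _ hyz)
        · exact absurd hyz (hs _ _ (hz y hy))
      · refine ⟨x, mem_cons_of_mem _ hx, hr, fun y hy hyx => ?_⟩
        rcases mem_cons.1 hy with rfl | hy
        exacts [hFG, hbefore y hy hyx]
    · rintro ⟨x, hx, hr, hbefore⟩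
      rcases mem_cons.1 hx with rfl | hx
      · exact Or.inl hr
      · exact Or.inr ⟨hbefore z mem_cons_self (hz x hx), x, hx, hr,
          fun y hy hyx => hbefore y (mem_cons_of_mem _ hy) hyx⟩

end List

open List Equiv

section Swap

variable {K : ℕ} {p q : Fin K}

theorem lex_map_swap_finRange_iff {β : Type*} [Preorder β] (f : Fin K → β) (hpq : p < q) :
    Lex (· < ·) ((finRange K).map fun x => f (swap p q x)) ((finRange K).map f) ↔
      f q < f p := by
  rw [lex_map_iff_of_pairwise (fun _ _ h => h.asymm) (pairwise_lt_finRange K)]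
  constructor
  · rintro ⟨x, -, hlt, hbefore⟩
    by_cases hxp : x = p
    · rwa [hxp, swap_apply_left] at hlt
    by_cases hxq : x = q
    · have hp := hbefore p (mem_finRange p) (hxq ▸ hpq)
      rw [hxq, swap_apply_right] at hlt
      rw [swap_apply_left] at hp
      exact absurd (hp ▸ hlt) (lt_irrefl _)
    · rw [swap_apply_of_ne_of_ne hxp hxq] at hlt
      exact absurd hlt (lt_irrefl _)
  · intro h
    refine ⟨p, mem_finRange p, by rwa [swap_apply_left], fun y _ hyp => ?_⟩
    rw [swap_apply_of_ne_of_ne hyp.ne (hyp.trans hpq).ne]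

theorem map_swap_finRange_eq_iff {β : Type*} (f : Fin K → β) :
    (finRange K).map (fun x => f (swap p q x)) = (finRange K).map f ↔ f p = f q := by
  simp only [map_inj_left, mem_finRange, forall_const]
  refine ⟨fun h => by simpa using (h p).symm, fun h x => ?_⟩
  rcases eq_or_ne x p with rfl | hxp
  · rw [swap_apply_left, h]
  rcases eq_or_ne x q with rfl | hxq
  · rw [swap_apply_right, h]
  · rw [swap_apply_of_ne_of_ne hxp hxq]

end Swap

section UpperPairs

variable {K : ℕ}

def upperPairs (K : ℕ) : List (Fin K × Fin K) :=
  (finRange K).flatMap fun i => ((finRange K).filter fun j => i < j).map fun j => (i, j)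

theorem mem_upperPairs {x : Fin K × Fin K} : x ∈ upperPairs K ↔ x.1 < x.2 := by
  simp [upperPairs, Prod.ext_iff, and_comm, eq_comm]

theorem upperPairs_pairwise_toLex_lt :
    (upperPairs K).Pairwise fun x y => toLex x < toLex y := by
  simp only [upperPairs, pairwise_flatMap, pairwise_map, Prod.Lex.toLex_lt_toLex]
  refine ⟨fun i _ => ((pairwise_lt_finRange K).filter _).imp (Or.inr ⟨trivial, ·⟩),
    (pairwise_lt_finRange K).imp fun hij x hx y hy => ?_⟩
  obtain ⟨_, -, rfl⟩ := mem_map.1 hx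
  obtain ⟨_, -, rfl⟩ := mem_map.1 hy
  exact Or.inl hij

theorem flatMap_upper_eq_map_upperPairs (a : Fin K → Fin K → ℕ) :
    (finRange K).flatMap (fun i => ((finRange K).filter fun j => i < j).map fun j => a i j) =
      (upperPairs K).map fun x => a x.1 x.2 := by
  simp [upperPairs, map_flatMap, Function.comp_def]

end UpperPairs

section ColumnSwap

variable {K : ℕ} {a : Fin K → Fin K → ℕ} {p q : Fin K}

/-- For symmetric `a`, transposing `p` and `q` exchanges `a i p` and `a i q` for every other `i`;
this says the first such change, in increasing `i`, is a decrease. -/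
def ColumnSwapDecreases (a : Fin K → Fin K → ℕ) (p q : Fin K) : Prop :=
  ∃ i, i ≠ p ∧ i ≠ q ∧ a i q < a i p ∧ ∀ i' < i, i' ≠ p → i' ≠ q → a i' p = a i' q

def sortedPair (i j : Fin K) : Fin K × Fin K := (min i j, max i j)

theorem sortedPair_mem_upperPairs {i j : Fin K} (h : i ≠ j) : sortedPair i j ∈ upperPairs K :=
  mem_upperPairs.2 (min_lt_max.2 h)

theorem apply_sortedPair (hsym : ∀ i j, a i j = a j i) (i j : Fin K) :
    a (sortedPair i j).1 (sortedPair i j).2 = a i j := by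
  rcases le_total i j with h | h
  · rw [sortedPair, min_eq_left h, max_eq_right h]
  · rw [sortedPair, min_eq_right h, max_eq_left h, hsym]

theorem apply_comp_sortedPair (hsym : ∀ i j, a i j = a j i) (f : Fin K → Fin K) (i j : Fin K) :
    a (f (sortedPair i j).1) (f (sortedPair i j).2) = a (f i) (f j) :=
  apply_sortedPair (a := fun i j => a (f i) (f j)) (fun _ _ => hsym _ _) i j

theorem toLex_sortedPair_lt {i i' z : Fin K} (hpz : p ≤ z) (h : i < i' ∨ i = i' ∧ p < z) :
    toLex (sortedPair i p) < toLex (sortedPair i' z) := by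
  simp only [sortedPair, Prod.Lex.toLex_lt_toLex, Fin.lt_def, Fin.le_def, Fin.ext_iff,
    Fin.coe_min, Fin.coe_max] at *
  omega

theorem exists_sortedPair_of_swap_ne (hsym : ∀ i j, a i j = a j i) {x : Fin K × Fin K}
    (hx : x ∈ upperPairs K) (hne : a (swap p q x.1) (swap p q x.2) ≠ a x.1 x.2) :
    ∃ i z, i ≠ p ∧ i ≠ q ∧ (z = p ∨ z = q) ∧ x = sortedPair i z := by
  obtain ⟨r, c⟩ := x
  have hrc : r < c := mem_upperPairs.1 hx
  by_cases hr : r = p ∨ r = q <;> by_cases hc : c = p ∨ c = q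
  · refine absurd ?_ hne
    rcases hr with rfl | rfl <;> rcases hc with rfl | rfl
    all_goals first
      | exact absurd hrc (lt_irrefl _)
      | simp only [swap_apply_left, swap_apply_right, hsym]
  · obtain ⟨hcp, hcq⟩ := not_or.1 hc
    refine ⟨c, r, hcp, hcq, hr, ?_⟩
    rw [sortedPair, min_eq_right hrc.le, max_eq_left hrc.le]
  · obtain ⟨hrp, hrq⟩ := not_or.1 hr
    refine ⟨r, c, hrp, hrq, hc, ?_⟩
    rw [sortedPair, min_eq_left hrc.le, max_eq_right hrc.le]
  · obtain ⟨hrp, hrq⟩ := not_or.1 hr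
    obtain ⟨hcp, hcq⟩ := not_or.1 hc
    exact absurd (by rw [swap_apply_of_ne_of_ne hrp hrq, swap_apply_of_ne_of_ne hcp hcq]) hne

theorem swap_apply_sortedPair (hsym : ∀ i j, a i j = a j i) {i z : Fin K} (hip : i ≠ p)
    (hiq : i ≠ q) :
    a (swap p q (sortedPair i z).1) (swap p q (sortedPair i z).2) = a i (swap p q z) := by
  rw [apply_comp_sortedPair hsym, swap_apply_of_ne_of_ne hip hiq]

theorem columnSwapDecreases_iff :
    ColumnSwapDecreases a p q ↔ ∃ i : Fin K, i ≠ p ∧ i ≠ q ∧ a i q < a i p ∧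
      ¬ ∃ i' : Fin K, (i' : ℕ) < (i : ℕ) ∧ i' ≠ p ∧ i' ≠ q ∧ a i' p < a i' q := by
  constructor
  · rintro ⟨i, hip, hiq, hlt, hbefore⟩
    refine ⟨i, hip, hiq, hlt, ?_⟩
    rintro ⟨i', hi', hi'p, hi'q, h⟩
    exact h.ne (hbefore i' hi' hi'p hi'q)
  · rintro ⟨i, hip, hiq, hlt, hbefore⟩
    -- the least index where `a · q < a · p` is a witness
    obtain ⟨i₀, ⟨hi₀p, hi₀q, hi₀lt⟩, hmin⟩ := wellFounded_lt.has_min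
      {i | i ≠ p ∧ i ≠ q ∧ a i q < a i p} ⟨i, hip, hiq, hlt⟩
    refine ⟨i₀, hi₀p, hi₀q, hi₀lt, fun i' hi' hi'p hi'q => ?_⟩
    have hle : a i' p ≤ a i' q := by
      by_contra! h
      exact hmin i' ⟨hi'p, hi'q, h⟩ hi'
    have hi₀i : i₀ ≤ i := not_lt.1 (hmin i ⟨hip, hiq, hlt⟩)
    have hge : ¬ a i' p < a i' q := fun h => hbefore ⟨i', lt_of_lt_of_le hi' hi₀i, hi'p, hi'q, h⟩
    omega

variable (hsym : ∀ i j, a i j = a j i)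
include hsym

theorem lex_map_swap_upperPairs_iff (hpq : p < q) :
    Lex (· < ·) ((upperPairs K).map fun x => a (swap p q x.1) (swap p q x.2))
        ((upperPairs K).map fun x => a x.1 x.2) ↔ ColumnSwapDecreases a p q := by
  rw [lex_map_iff_of_pairwise (fun _ _ h => h.asymm) upperPairs_pairwise_toLex_lt]
  constructor
  · rintro ⟨x, hx, hlt, hbefore⟩
    obtain ⟨i, z, hip, hiq, hz, rfl⟩ := exists_sortedPair_of_swap_ne hsym hx hlt.ne
    rw [swap_apply_sortedPair hsym hip hiq, apply_sortedPair hsym] at hlt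
    rcases hz with hz | hz <;> subst z
    · rw [swap_apply_left] at hlt
      refine ⟨i, hip, hiq, hlt, fun i' hi' hi'p hi'q => ?_⟩
      have := hbefore (sortedPair i' p) (sortedPair_mem_upperPairs hi'p)
        (toLex_sortedPair_lt le_rfl (Or.inl hi'))
      rw [swap_apply_sortedPair hsym hi'p hi'q, apply_sortedPair hsym, swap_apply_left] at this
      exact this.symm
    · -- the pair `(i, p)` precedes `(i, q)` and changes in the opposite direction
      have := hbefore (sortedPair i p) (sortedPair_mem_upperPairs hip)
        (toLex_sortedPair_lt hpq.le (Or.inr ⟨rfl, hpq⟩))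
      rw [swap_apply_sortedPair hsym hip hiq, apply_sortedPair hsym, swap_apply_left] at this
      rw [swap_apply_right] at hlt
      omega
  · rintro ⟨i, hip, hiq, hlt, hbefore⟩
    refine ⟨sortedPair i p, sortedPair_mem_upperPairs hip, ?_, fun y hy hyx => ?_⟩
    · rwa [swap_apply_sortedPair hsym hip hiq, apply_sortedPair hsym, swap_apply_left]
    by_contra hne
    obtain ⟨i', z, hi'p, hi'q, hz, rfl⟩ := exists_sortedPair_of_swap_ne hsym hy hne
    have hi' : i' < i := by
      by_contra! hii'
      rcases hz with hz | hz <;> subst z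
      · rcases hii'.lt_or_eq with h | rfl
        · exact (toLex_sortedPair_lt le_rfl (Or.inl h)).asymm hyx
        · exact lt_irrefl _ hyx
      · exact (toLex_sortedPair_lt hpq.le (hii'.lt_or_eq.imp_right (⟨·, hpq⟩))).asymm hyx
    rw [swap_apply_sortedPair hsym hi'p hi'q, apply_sortedPair hsym] at hne
    have := hbefore i' hi' hi'p hi'q
    rcases hz with hz | hz <;> subst z
    · exact hne (by rw [swap_apply_left, this])
    · exact hne (by rw [swap_apply_right, this])

end ColumnSwap

section DataMatrix

variable {K : ℕ} (M : DataMatrix K)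

def SwapDecreases (p q : Fin K) : Prop :=
  M.1 q < M.1 p ∨ M.1 p = M.1 q ∧
    (M.2.1 q < M.2.1 p ∨ M.2.1 p = M.2.1 q ∧
      (M.2.2.1 q < M.2.2.1 p ∨ M.2.2.1 p = M.2.2.1 q ∧ ColumnSwapDecreases M.2.2.2 p q))

def BreaksAt (p q : Fin K) : Prop :=
  ¬ ((M.1 p ≤ M.1 q) ∧
    (M.2.1 q < M.2.1 p → M.1 p < M.1 q) ∧
    (M.2.2.1 q < M.2.2.1 p → M.1 p < M.1 q ∨ M.2.1 p < M.2.1 q) ∧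
    (∀ i : Fin K, i ≠ p → i ≠ q → M.2.2.2 i q < M.2.2.2 i p →
      M.1 p < M.1 q ∨ M.2.1 p < M.2.1 q ∨ M.2.2.1 p < M.2.2.1 q ∨
      ∃ i' : Fin K, (i' : ℕ) < (i : ℕ) ∧ i' ≠ p ∧ i' ≠ q ∧
        M.2.2.2 i' p < M.2.2.2 i' q))

theorem not_orderedData_iff :
    ¬ OrderedData M ↔ ∃ (j : ℕ) (hj : j < K), 0 < j ∧ BreaksAt M ⟨j - 1, by omega⟩ ⟨j, hj⟩ := by
  simp only [OrderedData, not_forall, exists_prop]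
  refine exists_congr fun j => exists_congr fun hj => and_congr_right fun _ => ?_
  exact ⟨fun ⟨_, _, hp, hq, h⟩ => hp ▸ hq ▸ h, fun h => ⟨_, _, rfl, rfl, h⟩⟩

theorem breaksAt_iff_swapDecreases (p q : Fin K) : BreaksAt M p q ↔ SwapDecreases M p q := by
  rw [BreaksAt, SwapDecreases, columnSwapDecreases_iff]
  rcases lt_trichotomy (M.1 p) (M.1 q) with hg | hg | hg
  · simp [hg, hg.ne, hg.not_gt]
  · rw [hg]
    rcases lt_trichotomy (M.2.1 p) (M.2.1 q) with hn | hn | hn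
    · simp [hn, hn.ne, hn.not_gt]
    · rw [hn]
      rcases lt_trichotomy (M.2.2.1 p) (M.2.2.1 q) with hl | hl | hl
      · simp [hl, hl.ne, hl.not_gt]
      · simp [hl]
      · simp [hl, hl.not_gt]
    · simp [hn, hn.not_gt]
  · simp [hg, hg.not_gt]

theorem vvec_eq_append (N : DataMatrix K) :
    vvec N = (finRange K).map N.1 ++ ((finRange K).map N.2.1 ++ ((finRange K).map N.2.2.1 ++
      (upperPairs K).map fun x => N.2.2.2 x.1 x.2)) := by
  simp only [vvec, ofFn_eq_map, flatMap_upper_eq_map_upperPairs, append_assoc]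

theorem prec_permAct_swap_iff (hsym : ∀ i j, M.2.2.2 i j = M.2.2.2 j i) {p q : Fin K}
    (hpq : p < q) : prec (permAct (swap p q) M) M ↔ SwapDecreases M p q := by
  rw [prec, vvec_eq_append, vvec_eq_append]
  simp only [permAct]
  rw [lex_append_iff_of_length_eq _ _ (by simp), lex_append_iff_of_length_eq _ _ (by simp),
    lex_append_iff_of_length_eq _ _ (by simp), lex_map_swap_finRange_iff _ hpq,
    map_swap_finRange_eq_iff, lex_map_swap_finRange_iff _ hpq, map_swap_finRange_eq_iff,
    lex_map_swap_finRange_iff _ hpq, map_swap_finRange_eq_iff,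
    lex_map_swap_upperPairs_iff hsym hpq, SwapDecreases]

end DataMatrix

/-- A data matrix with symmetric `a`-part has a breaking position (is not
ordered) if and only if some adjacent transposition makes it strictly
`≺`-smaller. -/
theorem stmt11 (K : ℕ) (M : DataMatrix K)
    (hsym : ∀ i j, M.2.2.2 i j = M.2.2.2 j i) :
    ¬ OrderedData M ↔
      ∃ (j : ℕ) (hj : j < K), 0 < j ∧
        prec (permAct (Equiv.swap (⟨j - 1, by omega⟩ : Fin K) ⟨j, hj⟩) M) M := by
  rw [not_orderedData_iff]
  refine exists_congr fun j => exists_congr fun hj => and_congr_right fun hj0 => ?_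
  rw [prec_permAct_swap_iff M hsym (Fin.mk_lt_mk.2 (by omega)), breaksAt_iff_swapDecreases]
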